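/- With T, the T_k, d_t, δ_k, ℚ and the relations ≤_k as defined in the context: let ⟨q_k⟩_{k∈ℕ} be a sequence in ℚ such that q_{2k+2} ≤_{k+1} q_{2k+1} and q_{2k+1} ≤_k q_{2k} for every k ∈ ℕ. Then q̂ = ⋂_{k∈ℕ} q_k belongs to ℚ (and is accordingly a lower bound for {q_k : k ∈ ℕ} under inclusion); moreover q̂ ∩ T_{k+1} = q_{2k+1} ∩ T_{k+1} for each k ∈ ℕ. -/

import Mathlib

open Filter
open scoped Classical

/-- A node of the tree: a rank `k` together with a tuple `⟨C_i⟩_{i<k}` with `C_i ⊆ n_i`. -/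
abbrev NodeT (n : ℕ → ℕ) : Type :=
  Σ k : ℕ, ∀ i : Fin k, Finset (Fin (n i))

/-- The tree order: `t ≤ t'` iff `rank t ≤ rank t'` and `C_i(t) = C_i(t')` for `i < rank t`. -/
def nodeLE {n : ℕ → ℕ} (t t' : NodeT n) : Prop :=
  ∃ h : t.1 ≤ t'.1, ∀ i : Fin t.1, t.2 i = t'.2 (Fin.castLE h i)

/-- The tree `T`: the nodes `t` of rank `k` with `#(C_i(t)) ≥ (1 - 2^{-i-1})·n_i` for `i < k`;
`T_k` is the set of such nodes of rank `k`. -/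
def TreeT (n : ℕ → ℕ) : Set (NodeT n) :=
  {t | ∀ i : Fin t.1, (1 - (2 : ℝ)⁻¹ ^ ((i : ℕ) + 1)) * n i ≤ ((t.2 i).card : ℝ)}

/-- `t × C`: the extension of a node `t` of rank `k` by a further coordinate `C ⊆ n_k`. -/
def extendNode {n : ℕ → ℕ} (t : NodeT n) (C : Finset (Fin (n t.1))) : NodeT n :=
  ⟨t.1 + 1, Fin.snoc (α := fun i : Fin (t.1 + 1) => Finset (Fin (n i))) t.2 C⟩

/-- For a family `𝒜` of (finite) sets, `dp 𝒜` is the least cardinality of a finite set meeting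
every member of `𝒜`. -/
noncomputable def dp {β : Type*} (𝒜 : Set (Finset β)) : ℕ :=
  sInf {m | ∃ I : Finset β, I.card = m ∧ ∀ A ∈ 𝒜, ∃ a ∈ I, a ∈ A}

/-- `γ_k = (k+1)/ln ⌈2^{-k-1} n_k⌉`. -/
noncomputable def gam (n : ℕ → ℕ) (k : ℕ) : ℝ :=
  ((k : ℝ) + 1) / Real.log (⌈(2 : ℝ)⁻¹ ^ (k + 1) * n k⌉₊ : ℝ)

/-- `d_t(S) = γ_{rank t} · ln (dp {C : t × C ∈ S})`, with value `-∞` if no member of `S` is of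
the form `t × C`. -/
noncomputable def dt {n : ℕ → ℕ} (t : NodeT n) (S : Set (NodeT n)) : EReal :=
  if {C : Finset (Fin (n t.1)) | extendNode t C ∈ S} = ∅ then ⊥
  else ((gam n t.1 * Real.log (dp {C : Finset (Fin (n t.1)) | extendNode t C ∈ S}) : ℝ) : EReal)

/-- `δ_k(q) = min { d_t(q) : t ∈ q ∩ T_k }`. -/
noncomputable def deltaQ {n : ℕ → ℕ} (k : ℕ) (q : Set (NodeT n)) : EReal :=
  sInf {x : EReal | ∃ t ∈ q, t.1 = k ∧ x = dt t q}

/-- The p.o.set `ℚ`: nonempty downward-closed subtrees `q ⊆ T`, every node of which has a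
successor in `q`, with `lim_{k→∞} δ_k(q) = ∞`. -/
def QQ (n : ℕ → ℕ) : Set (Set (NodeT n)) :=
  {q | q ⊆ TreeT n ∧ q.Nonempty ∧
    (∀ t t' : NodeT n, nodeLE t t' → t' ∈ q → t ∈ q) ∧
    (∀ t ∈ q, ∃ t' ∈ q, nodeLE t t' ∧ t'.1 = t.1 + 1) ∧
    Tendsto (fun k => deltaQ k q) atTop (nhds (⊤ : EReal))}

/-- `q ≤_k q'` iff `q ⊆ q'`, `q ∩ T_k = q' ∩ T_k`, and
`d_t(q) ≥ min(k, d_t(q')) - 2^{-k}` for every `t ∈ q`. -/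
def lek (n : ℕ → ℕ) (k : ℕ) (q q' : Set (NodeT n)) : Prop :=
  q ⊆ q' ∧ {t ∈ q | t.1 = k} = {t ∈ q' | t.1 = k} ∧
    ∀ t ∈ q, min ((k : ℝ) : EReal) (dt t q') - (((2 : ℝ)⁻¹ ^ k : ℝ) : EReal) ≤ dt t q

/-!
Both hypotheses together form one chain `q_{m+1} ≤_{⌈m/2⌉} q_m`. Since `≤_j` fixes level `j`,
and hence every lower level of a tree all of whose nodes have successors, level `k+1` of `q_m`
is constant from `m = 2k+1` on; so `q̂` agrees with `q_{2k+1}` at level `k+1`, and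
`d_t(q̂) = d_t(q_{2k+1})` for `t` of rank `k`. Each step of the chain lowers `min(j, d_t)` by at
most `2^{-⌈m/2⌉}`, by at most `3` in total; starting from `q_{2j}`, where `d_t > j` for all nodes
of large rank, this gives `d_t(q̂) ≥ j - 3` there, whence `δ_k(q̂) → ∞`.
-/
section Tree

variable {n : ℕ → ℕ}

lemma nodeLE_refl (t : NodeT n) : nodeLE t t := ⟨le_rfl, fun _ => rfl⟩

lemma nodeLE_trans {t s u : NodeT n} (hts : nodeLE t s) (hsu : nodeLE s u) : nodeLE t u := by
  obtain ⟨h, H⟩ := hts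
  obtain ⟨h', H'⟩ := hsu
  exact ⟨h.trans h', fun i => (H i).trans (H' _)⟩

lemma nodeLE_of_rank_eq_zero {t : NodeT n} (ht : t.1 = 0) (s : NodeT n) : nodeLE t s :=
  ⟨ht ▸ Nat.zero_le _, fun i => (Fin.cast ht i).elim0⟩

lemma exists_nodeLE_rank_add {A : Set (NodeT n)}
    (hsucc : ∀ t ∈ A, ∃ t' ∈ A, nodeLE t t' ∧ t'.1 = t.1 + 1) {t : NodeT n} (ht : t ∈ A) :
    ∀ d, ∃ s ∈ A, nodeLE t s ∧ s.1 = t.1 + d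
  | 0 => ⟨t, ht, nodeLE_refl t, rfl⟩
  | d + 1 => by
    obtain ⟨s, hs, hts, hrank_s⟩ := exists_nodeLE_rank_add hsucc ht d
    obtain ⟨s', hs', hss', hrank⟩ := hsucc s hs
    exact ⟨s', hs', nodeLE_trans hts hss', by omega⟩

lemma level_eq_of_level_eq {A B : Set (NodeT n)} (hAB : A ⊆ B)
    (hA : ∀ t t', nodeLE t t' → t' ∈ A → t ∈ A)
    (hB : ∀ t ∈ B, ∃ t' ∈ B, nodeLE t t' ∧ t'.1 = t.1 + 1) {i j : ℕ} (hij : i ≤ j)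
    (hj : {t ∈ A | t.1 = j} = {t ∈ B | t.1 = j}) :
    {t ∈ A | t.1 = i} = {t ∈ B | t.1 = i} := by
  refine Set.Subset.antisymm (fun t ht => ⟨hAB ht.1, ht.2⟩) ?_
  rintro t ⟨htB, rfl⟩
  obtain ⟨s, hsB, hts, hs⟩ := exists_nodeLE_rank_add hB htB (j - t.1)
  have hsA : s ∈ {t ∈ A | t.1 = j} := hj ▸ ⟨hsB, by omega⟩
  exact ⟨hA t s hts hsA.1, rfl⟩

lemma dt_congr_of_level_eq {A B : Set (NodeT n)} {t : NodeT n}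
    (h : {s ∈ A | s.1 = t.1 + 1} = {s ∈ B | s.1 = t.1 + 1}) : dt t A = dt t B := by
  have hext : ∀ C, extendNode t C ∈ A ↔ extendNode t C ∈ B := fun C => by
    simpa [extendNode] using Set.ext_iff.mp h (extendNode t C)
  simp only [dt, hext]

lemma lek.coe_sub_le_min_dt {k : ℕ} {A B : Set (NodeT n)} (h : lek n k A B) {t : NodeT n}
    (ht : t ∈ A) {x y : ℝ} (hx : x ≤ k) (hy : (y : EReal) ≤ min (x : EReal) (dt t B)) :
    ((y - 2⁻¹ ^ k : ℝ) : EReal) ≤ min (x : EReal) (dt t A) := by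
  have hε : (0 : ℝ) ≤ 2⁻¹ ^ k := by positivity
  refine le_min ?_ ?_
  · have hyx := EReal.coe_le_coe_iff.mp (hy.trans (min_le_left _ _))
    exact EReal.coe_le_coe_iff.mpr (by linarith)
  · calc ((y - 2⁻¹ ^ k : ℝ) : EReal)
        ≤ min ((k : ℝ) : EReal) (dt t B) - ((2⁻¹ ^ k : ℝ) : EReal) := by
          rw [EReal.coe_sub]
          exact EReal.sub_le_sub (hy.trans (min_le_min_right _ (by exact_mod_cast hx))) le_rfl
      _ ≤ dt t A := h.2.2 t ht

end Tree

lemma EReal.coe_sub_sum_le_of_forall {a : ℕ → EReal} {ε : ℕ → ℝ} {N : ℕ}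
    (h : ∀ i < N, ∀ y : ℝ, (y : EReal) ≤ a i → ((y - ε i : ℝ) : EReal) ≤ a (i + 1))
    {y : ℝ} (hy : (y : EReal) ≤ a 0) : ((y - ∑ i ∈ Finset.range N, ε i : ℝ) : EReal) ≤ a N := by
  induction N with
  | zero => simpa using hy
  | succ N ih =>
    rw [Finset.sum_range_succ, ← sub_sub]
    exact h N N.lt_succ_self _ (ih fun i hi => h i (hi.trans N.lt_succ_self))

lemma sum_range_two_mul_inv_two_pow_succ_div_two (M : ℕ) :
    ∑ i ∈ Finset.range (2 * M), (2⁻¹ : ℝ) ^ ((i + 1) / 2) = 3 - 3 * 2⁻¹ ^ M := by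
  induction M with
  | zero => simp
  | succ M ih =>
    rw [show 2 * (M + 1) = 2 * M + 1 + 1 by ring, Finset.sum_range_succ, Finset.sum_range_succ, ih,
      show (2 * M + 1) / 2 = M by omega, show (2 * M + 1 + 1) / 2 = M + 1 by omega, pow_succ]
    ring

lemma sum_range_inv_two_pow_succ_div_two_le (N : ℕ) :
    ∑ i ∈ Finset.range N, (2⁻¹ : ℝ) ^ ((i + 1) / 2) ≤ 3 :=
  calc ∑ i ∈ Finset.range N, (2⁻¹ : ℝ) ^ ((i + 1) / 2)
      ≤ ∑ i ∈ Finset.range (2 * N), (2⁻¹ : ℝ) ^ ((i + 1) / 2) :=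
        Finset.sum_le_sum_of_subset_of_nonneg (Finset.range_subset_range.mpr (by omega))
          fun _ _ _ => by positivity
    _ ≤ 3 := by
        rw [sum_range_two_mul_inv_two_pow_succ_div_two]
        linarith [pow_nonneg (by norm_num : (0 : ℝ) ≤ 2⁻¹) N]

section FusionSequence

variable {n : ℕ → ℕ} {q : ℕ → Set (NodeT n)}

lemma lek_succ_div_two (h1 : ∀ k, lek n (k + 1) (q (2 * k + 2)) (q (2 * k + 1)))
    (h2 : ∀ k, lek n k (q (2 * k + 1)) (q (2 * k))) (m : ℕ) :
    lek n ((m + 1) / 2) (q (m + 1)) (q m) := by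
  rcases Nat.even_or_odd' m with ⟨k, rfl | rfl⟩
  · rw [show (2 * k + 1) / 2 = k by omega]
    exact h2 k
  · rw [show (2 * k + 1 + 1) / 2 = k + 1 by omega]
    exact h1 k

lemma level_eq_of_lek_succ_div_two (hq : ∀ m, q m ∈ QQ n)
    (hstep : ∀ m, lek n ((m + 1) / 2) (q (m + 1)) (q m)) (k : ℕ) {m : ℕ} (hm : 2 * k + 1 ≤ m) :
    {t ∈ q m | t.1 = k + 1} = {t ∈ q (2 * k + 1) | t.1 = k + 1} := by
  induction m, hm using Nat.le_induction with
  | base => rfl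
  | succ m hm ih =>
    refine Eq.trans ?_ ih
    exact level_eq_of_level_eq (hstep m).1 (hq (m + 1)).2.2.1 (hq m).2.2.2.1 (by omega)
      (hstep m).2.1

lemma level_iInter_eq_of_lek_succ_div_two (hq : ∀ m, q m ∈ QQ n)
    (hstep : ∀ m, lek n ((m + 1) / 2) (q (m + 1)) (q m)) (k : ℕ) :
    {t ∈ ⋂ m, q m | t.1 = k + 1} = {t ∈ q (2 * k + 1) | t.1 = k + 1} := by
  refine Set.Subset.antisymm (fun t ht => ⟨Set.mem_iInter.mp ht.1 _, ht.2⟩) ?_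
  rintro t ⟨ht, hk⟩
  refine ⟨Set.mem_iInter.mpr fun m => ?_, hk⟩
  rcases le_total m (2 * k + 1) with hm | hm
  · exact antitone_nat_of_succ_le (fun m => (hstep m).1) hm ht
  · exact (level_eq_of_lek_succ_div_two hq hstep k hm ▸ ⟨ht, hk⟩ : t ∈ {t ∈ q m | t.1 = k + 1}).1

-- The losses `2^{-⌈m/2⌉}` along the chain sum to at most `3`.
lemma coe_sub_three_le_dt_of_lek_succ_div_two
    (hstep : ∀ m, lek n ((m + 1) / 2) (q (m + 1)) (q m)) {j N : ℕ} {t : NodeT n}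
    (ht : t ∈ q (2 * j + N)) (hj : ((j : ℝ) : EReal) ≤ dt t (q (2 * j))) :
    (((j : ℝ) - 3 : ℝ) : EReal) ≤ dt t (q (2 * j + N)) := by
  have hanti : Antitone q := antitone_nat_of_succ_le fun m => (hstep m).1
  have hchain := EReal.coe_sub_sum_le_of_forall (N := N)
    (a := fun i => min ((j : ℝ) : EReal) (dt t (q (2 * j + i))))
    (ε := fun i => 2⁻¹ ^ ((2 * j + i + 1) / 2)) (y := j)
    (fun i hi y hy => (hstep (2 * j + i)).coe_sub_le_min_dt (hanti (by omega) ht)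
      (by exact_mod_cast (by omega : j ≤ (2 * j + i + 1) / 2)) hy)
    (le_min le_rfl hj)
  have hsum : ∑ i ∈ Finset.range N, (2⁻¹ : ℝ) ^ ((2 * j + i + 1) / 2) ≤ 3 :=
    (Finset.sum_le_sum fun i _ => pow_le_pow_of_le_one (by norm_num) (by norm_num)
      (by omega)).trans (sum_range_inv_two_pow_succ_div_two_le N)
  calc (((j : ℝ) - 3 : ℝ) : EReal)
      ≤ (((j : ℝ) - ∑ i ∈ Finset.range N, (2⁻¹ : ℝ) ^ ((2 * j + i + 1) / 2) : ℝ) : EReal) :=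
        EReal.coe_le_coe_iff.mpr (by linarith)
    _ ≤ dt t (q (2 * j + N)) := hchain.trans (min_le_right _ _)

lemma tendsto_deltaQ_iInter_of_lek_succ_div_two (hq : ∀ m, q m ∈ QQ n)
    (hstep : ∀ m, lek n ((m + 1) / 2) (q (m + 1)) (q m)) :
    Tendsto (fun k => deltaQ k (⋂ m, q m)) atTop (nhds ⊤) := by
  rw [EReal.tendsto_nhds_top_iff_real]
  intro x
  obtain ⟨j, hj⟩ := exists_nat_gt (x + 3)
  filter_upwards [EReal.tendsto_nhds_top_iff_real.mp (hq (2 * j)).2.2.2.2 j,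
    eventually_ge_atTop j] with k hδ hjk
  refine (EReal.coe_lt_coe_iff.mpr (by linarith : x < j - 3)).trans_le (le_sInf ?_)
  rintro _ ⟨t, ht, rfl, rfl⟩
  have hmem := Set.mem_iInter.mp ht
  rw [dt_congr_of_level_eq (level_iInter_eq_of_lek_succ_div_two hq hstep t.1),
    show 2 * t.1 + 1 = 2 * j + (2 * (t.1 - j) + 1) by omega]
  exact coe_sub_three_le_dt_of_lek_succ_div_two hstep (hmem _)
    (hδ.le.trans (sInf_le ⟨t, hmem _, rfl, rfl⟩))

lemma iInter_mem_QQ_of_lek_succ_div_two (hq : ∀ m, q m ∈ QQ n)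
    (hstep : ∀ m, lek n ((m + 1) / 2) (q (m + 1)) (q m)) : (⋂ m, q m) ∈ QQ n := by
  refine ⟨(Set.iInter_subset q 0).trans (hq 0).1, ?_, ?_, ?_,
    tendsto_deltaQ_iInter_of_lek_succ_div_two hq hstep⟩
  · refine ⟨⟨0, fun i => i.elim0⟩, Set.mem_iInter.mpr fun m => ?_⟩
    obtain ⟨t, ht⟩ := (hq m).2.1
    exact (hq m).2.2.1 _ t (nodeLE_of_rank_eq_zero rfl t) ht
  · exact fun t t' htt' ht' =>
      Set.mem_iInter.mpr fun m => (hq m).2.2.1 t t' htt' (Set.mem_iInter.mp ht' m)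
  · intro t ht
    obtain ⟨t', ht', htt', hrank⟩ := (hq (2 * t.1 + 1)).2.2.2.1 t (Set.mem_iInter.mp ht _)
    have hmem : t' ∈ {s ∈ ⋂ m, q m | s.1 = t.1 + 1} :=
      (level_iInter_eq_of_lek_succ_div_two hq hstep t.1).symm ▸ ⟨ht', hrank⟩
    exact ⟨t', hmem.1, htt', hrank⟩

end FusionSequence

theorem stmt_5_general (n : ℕ → ℕ)
    (q : ℕ → Set (NodeT n)) (hq : ∀ k, q k ∈ QQ n)
    (h1 : ∀ k, lek n (k + 1) (q (2 * k + 2)) (q (2 * k + 1)))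
    (h2 : ∀ k, lek n k (q (2 * k + 1)) (q (2 * k))) :
    (⋂ k, q k) ∈ QQ n ∧
      ∀ k, {t ∈ ⋂ k', q k' | t.1 = k + 1} = {t ∈ q (2 * k + 1) | t.1 = k + 1} := by
  have hstep := lek_succ_div_two h1 h2
  exact ⟨iInter_mem_QQ_of_lek_succ_div_two hq hstep, level_iInter_eq_of_lek_succ_div_two hq hstep⟩

/-- **Lemma 1H.** If `⟨q_k⟩` is a sequence in `ℚ` with `q_{2k+2} ≤_{k+1} q_{2k+1} ≤_k q_{2k}`
for every `k`, then `q̂ = ⋂_k q_k` belongs to `ℚ` (so is a lower bound for `{q_k}` in `ℚ`), and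
`q̂ ∩ T_{k+1} = q_{2k+1} ∩ T_{k+1}` for every `k`. -/
theorem stmt_5 (n : ℕ → ℕ) (hn : ∀ k, 2 ^ (k + 1) < n k)
    (q : ℕ → Set (NodeT n)) (hq : ∀ k, q k ∈ QQ n)
    (h1 : ∀ k, lek n (k + 1) (q (2 * k + 2)) (q (2 * k + 1)))
    (h2 : ∀ k, lek n k (q (2 * k + 1)) (q (2 * k))) :
    (⋂ k, q k) ∈ QQ n ∧
      ∀ k, {t ∈ ⋂ k', q k' | t.1 = k + 1} = {t ∈ q (2 * k + 1) | t.1 = k + 1} :=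
  stmt_5_general n q hq h1 h2
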